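/- Let y be a process such that each y_τ is 𝓕_τ-measurable and integrable, and y_τ = φ_0(τ) + Σ_{m=1}^p φ_m(τ) y_{τ−m} + u_τ almost surely for every τ ∈ ℤ, where u_τ = ε_τ + Σ_{j=1}^q θ_j(τ) ε_{τ−j}. Then for every t ∈ ℤ and every integer N ≥ 1, the forecast error satisfies, almost surely, y_t − E[y_t | 𝓕_{t−N}] = Σ_{r=0}^{N−1} ξ*_{t,r} ε_{t−r}, and its mean square error is E[(y_t − E[y_t | 𝓕_{t−N}])²] = Σ_{r=0}^{N−1} (ξ*_{t,r})² σ_{t−r}². -/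

import Mathlib

/-!
Expanding `det Φ_{t,k}` along its first column shows that `ξ_{t,k}` solves the homogeneous
recursion `ξ_{t,k} = Σ_m φ_m(t-k+m) ξ_{t,k-m}`, i.e. it is the Green function of the AR part.
Weighting the recursion for `y_{t-k}` by `ξ_{t,k}` and summing over `k < N` therefore telescopes:
`y_t` is an `𝓕_{t-N}`-measurable predictor plus `Σ_{r<N} ξ*_{t,r} ε_{t-r}`. Conditioning on
`𝓕_{t-N}` kills this sum of later martingale differences, so it is the forecast error, and the
orthogonality of martingale differences in `L²` gives the mean square error.
-/

open Finset

/-- The `k × k` solution matrix `Φ_{t,k}`: its (1-based) `(i,j)` entry is `-1` if `i = j-1`,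
`φ_{1+i−j}(t−k+i)` if `0 ≤ i−j ≤ p−1`, and `0` otherwise. -/
noncomputable def PhiMat (p : ℕ) (φ : ℕ → ℤ → ℝ) (t : ℤ) (k : ℕ) :
    Matrix (Fin k) (Fin k) ℝ :=
  fun i j =>
    if (i : ℕ) + 1 = (j : ℕ) then -1
    else if (j : ℕ) ≤ (i : ℕ) ∧ (i : ℕ) - (j : ℕ) + 1 ≤ p then
      φ ((i : ℕ) - (j : ℕ) + 1) (t - (k : ℤ) + (i : ℕ) + 1)
    else 0

/-- The Hessenbergian (Green function) `ξ_{t,k} = det Φ_{t,k}`, with the conventions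
`ξ_{t,0} = 1` (empty determinant) and `ξ_{t,k} = 0` for `k < 0`. -/
noncomputable def xi (p : ℕ) (φ : ℕ → ℤ → ℝ) (t : ℤ) (k : ℤ) : ℝ :=
  if 0 ≤ k then (PhiMat p φ t k.toNat).det else 0

namespace PhiMat

variable (p : ℕ) (φ : ℕ → ℤ → ℝ) (t : ℤ)

theorem submatrix_succ_succ (k : ℕ) :
    (PhiMat p φ t (k + 1)).submatrix Fin.succ Fin.succ = PhiMat p φ t k := by
  ext i j
  simp only [Matrix.submatrix_apply, PhiMat, Fin.val_succ, Nat.add_sub_add_right,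
    add_le_add_iff_right, Nat.add_right_cancel_iff]
  congr 3
  push_cast
  ring

/-- The minor of the first column at row `i` is block triangular: the rows above `i`
carry the superdiagonal `-1`s, the rows below form `Φ_{t,k-i}`. -/
theorem det_submatrix_succAbove_succ (k i : ℕ) (hi : i ≤ k) :
    ((PhiMat p φ t (k + 1)).submatrix (Fin.succAbove ⟨i, by omega⟩) Fin.succ).det
      = (-1) ^ i * (PhiMat p φ t (k - i)).det := by
  induction i generalizing k with
  | zero =>
    rw [show (⟨0, _⟩ : Fin (k + 1)) = 0 from rfl, Fin.succAbove_zero, submatrix_succ_succ]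
    simp
  | succ i ih =>
    obtain ⟨k, rfl⟩ : ∃ k', k = k' + 1 := ⟨k - 1, by omega⟩
    set M := (PhiMat p φ t (k + 2)).submatrix (Fin.succAbove ⟨i + 1, by omega⟩) Fin.succ
    have hrow : ∀ j, M 0 j = if j = 0 then -1 else 0 := by
      intro j
      have h0 : (⟨i + 1, by omega⟩ : Fin (k + 2)).succAbove 0 = 0 :=
        Fin.succAbove_of_castSucc_lt _ _ (by simp [Fin.lt_def])
      simp only [M, Matrix.submatrix_apply, h0, PhiMat, Fin.val_succ, Fin.val_zero, Fin.ext_iff]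
      by_cases hj : (j : ℕ) = 0 <;> simp [hj]
    have hminor : M.submatrix Fin.succ Fin.succ
        = (PhiMat p φ t (k + 1)).submatrix (Fin.succAbove ⟨i, by omega⟩) Fin.succ := by
      rw [← submatrix_succ_succ p φ t (k + 1)]
      ext a b
      simp only [M, Matrix.submatrix_apply]
      rw [show (⟨i + 1, _⟩ : Fin (k + 2)) = (⟨i, by omega⟩ : Fin (k + 1)).succ from rfl,
        Fin.succ_succAbove_succ]
    have hdet : M.det = -(M.submatrix Fin.succ Fin.succ).det := by
      rw [Matrix.det_succ_row_zero, Fintype.sum_eq_single 0 fun j hj => by simp [hrow, hj]]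
      simp [hrow, Fin.succAbove_zero]
    rw [hdet, hminor, ih k (by omega), show k + 1 - (i + 1) = k - i by omega]
    ring

theorem det_succ (k : ℕ) :
    (PhiMat p φ t (k + 1)).det
      = ∑ i ∈ range (k + 1),
          (if i + 1 ≤ p then φ (i + 1) (t - ↑(k - i)) else 0) * (PhiMat p φ t (k - i)).det := by
  rw [Matrix.det_succ_column_zero, ← Fin.sum_univ_eq_sum_range]
  refine Fintype.sum_congr _ _ fun i => ?_
  have hi : (i : ℕ) ≤ k := by omega
  rw [show i = ⟨i, by omega⟩ from rfl, det_submatrix_succAbove_succ p φ t k i hi]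
  simp only [PhiMat, Fin.val_zero, Nat.add_eq_zero_iff, one_ne_zero, and_false, if_false,
    zero_le, true_and, Nat.sub_zero, Nat.cast_sub hi]
  have hsq : ((-1 : ℝ) ^ (i : ℕ)) * (-1) ^ (i : ℕ) = 1 := by
    rw [← pow_add, Even.neg_one_pow ⟨i, rfl⟩]
  rw [show t - ↑(k + 1) + ↑↑i + 1 = t - (↑k - ↑↑i) by push_cast; ring]
  linear_combination ((if ↑i + 1 ≤ p then φ (↑i + 1) (t - (↑k - ↑↑i)) else 0) *
    (PhiMat p φ t (k - ↑i)).det) * hsq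

end PhiMat

section Xi

variable (p : ℕ) (φ : ℕ → ℤ → ℝ) (t : ℤ)

theorem xi_natCast (k : ℕ) : xi p φ t k = (PhiMat p φ t k).det := by
  simp [xi]

theorem xi_zero : xi p φ t 0 = 1 := by
  simp [xi, Matrix.det_isEmpty]

theorem xi_natCast_sub (r j : ℕ) :
    xi p φ t ((r : ℤ) - j) = if j ≤ r then xi p φ t ↑(r - j) else 0 := by
  split_ifs with h
  · rw [Nat.cast_sub h]
  · exact if_neg (by omega)

theorem xi_succ (k : ℕ) :
    xi p φ t ↑(k + 1) = ∑ m ∈ Icc 1 p,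
      if m ≤ k + 1 then φ m (t - ↑(k + 1 - m)) * xi p φ t ↑(k + 1 - m) else 0 := by
  rw [xi_natCast, PhiMat.det_succ, range_eq_Ico]
  simp only [ite_mul, zero_mul, ← xi_natCast]
  have hshift := sum_Ico_add'
    (fun m => if m ≤ p then φ m (t - ↑(k + 1 - m)) * xi p φ t ↑(k + 1 - m) else 0) 0 (k + 1) 1
  simp only [Nat.add_sub_add_right, zero_add] at hshift
  rw [hshift, ← sum_filter, ← sum_filter]
  exact sum_congr (by ext; simp; omega) fun _ _ => rfl

end Xi

theorem sum_range_ite_add_lt {M : Type*} [AddCommMonoid M] (N m : ℕ) (f : ℕ → M) :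
    ∑ k ∈ range N, (if k + m < N then f k else 0)
      = ∑ s ∈ range N, if m ≤ s then f (s - m) else 0 := by
  rw [← sum_filter, ← sum_filter,
    show (range N).filter (· + m < N) = range (N - m) by ext; simp; omega,
    show (range N).filter (m ≤ ·) = Ico m N by ext; simp; omega, sum_Ico_eq_sum_range]
  simp

theorem sum_range_sum_mul_shift {R : Type*} [CommSemiring R] (a x : ℕ → R) (b : ℕ → ℕ → R) (M : Finset ℕ) (N : ℕ) :
    ∑ k ∈ range N, ∑ m ∈ M, a k * b m k * x (k + m)
      = ∑ s ∈ range N, (∑ m ∈ M, if m ≤ s then b m (s - m) * a (s - m) else 0) * x s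
        + ∑ k ∈ range N, ∑ m ∈ M, if N ≤ k + m then a k * b m k * x (k + m) else 0 := by
  have hsplit : ∀ k m, a k * b m k * x (k + m)
      = (if k + m < N then a k * b m k * x (k + m) else 0)
        + if N ≤ k + m then a k * b m k * x (k + m) else 0 := by
    intro k m
    split_ifs <;> first | omega | simp
  rw [sum_congr rfl fun k _ => sum_congr rfl fun m _ => hsplit k m]
  simp_rw [sum_add_distrib, sum_mul, ite_mul, zero_mul]
  congr 1
  rw [sum_comm, sum_comm (s := range N)]
  refine sum_congr rfl fun m _ => ?_
  rw [sum_range_ite_add_lt]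
  refine sum_congr rfl fun s _ => ?_
  split_ifs with h
  · rw [Nat.sub_add_cancel h]; ring
  · rfl

theorem head_eq_of_recurrence {R : Type*} [CommRing R] {a x w : ℕ → R} {b : ℕ → ℕ → R}
    {P N : ℕ} (hN : 0 < N)
    (ha₀ : a 0 = 1)
    (ha : ∀ s, 0 < s → a s = ∑ m ∈ Icc 1 P, if m ≤ s then b m (s - m) * a (s - m) else 0)
    (hx : ∀ k < N, x k = ∑ m ∈ Icc 1 P, b m k * x (k + m) + w k) :
    x 0 = ∑ k ∈ range N, a k * w k
      + ∑ k ∈ range N, ∑ m ∈ Icc 1 P, if N ≤ k + m then a k * b m k * x (k + m) else 0 := by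
  obtain ⟨n, rfl⟩ : ∃ n, N = n + 1 := ⟨N - 1, by omega⟩
  have hexpand : ∑ k ∈ range (n + 1), a k * x k
      = ∑ k ∈ range (n + 1), ∑ m ∈ Icc 1 P, a k * b m k * x (k + m)
        + ∑ k ∈ range (n + 1), a k * w k := by
    rw [← sum_add_distrib]
    refine sum_congr rfl fun k hk => ?_
    rw [hx k (mem_range.1 hk), mul_add, mul_sum]
    simp only [mul_assoc]
  have hzero : ∑ m ∈ Icc 1 P, (if m ≤ 0 then b m (0 - m) * a (0 - m) else 0) = 0 :=
    sum_eq_zero fun m hm => if_neg (Nat.not_le.2 (mem_Icc.1 hm).1)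
  have hrec : ∀ s ∈ range n,
      (∑ m ∈ Icc 1 P, if m ≤ s + 1 then b m (s + 1 - m) * a (s + 1 - m) else 0) * x (s + 1)
        = a (s + 1) * x (s + 1) := fun s _ => by rw [← ha (s + 1) s.succ_pos]
  rw [sum_range_sum_mul_shift, sum_range_succ', sum_range_succ', hzero, zero_mul, add_zero,
    sum_congr rfl hrec, ha₀, one_mul] at hexpand
  linear_combination hexpand

section Parma

variable (p : ℕ) (φ : ℕ → ℤ → ℝ) (q : ℕ) (θ : ℕ → ℤ → ℝ) (t : ℤ)

noncomputable def xiStar (r : ℕ) : ℝ :=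
  xi p φ t r + ∑ j ∈ Icc 1 q, θ j (t - r + j) * xi p φ t ((r : ℤ) - j)

/-- What remains of the unrolled recursion besides the `ε_{t-r}`, `r < N`: it only involves
times `≤ t - N`, and turns out to be `E[y_t | 𝓕_{t-N}]`. -/
noncomputable def parmaPredictor (N : ℕ) (Y E : ℤ → ℝ) : ℝ :=
  ∑ k ∈ range N, xi p φ t k * φ 0 (t - k)
    + ∑ k ∈ range N, ∑ m ∈ Icc 1 p,
        (if N ≤ k + m then xi p φ t k * φ m (t - k) * Y (t - ↑(k + m)) else 0)
    + ∑ k ∈ range N, ∑ j ∈ Icc 1 q,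
        (if N ≤ k + j then xi p φ t k * θ j (t - k) * E (t - ↑(k + j)) else 0)

theorem sum_xi_mul_movingAverage (N : ℕ) (E : ℤ → ℝ) :
    ∑ k ∈ range N, xi p φ t k * (E (t - k) + ∑ j ∈ Icc 1 q, θ j (t - k) * E (t - ↑(k + j)))
      = ∑ r ∈ range N, xiStar p φ q θ t r * E (t - r)
        + ∑ k ∈ range N, ∑ j ∈ Icc 1 q,
            (if N ≤ k + j then xi p φ t k * θ j (t - k) * E (t - ↑(k + j)) else 0) := by
  simp only [mul_add, sum_add_distrib, mul_sum, ← mul_assoc]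
  rw [sum_range_sum_mul_shift (fun k => xi p φ t k) (fun r => E (t - r)) (fun j k => θ j (t - k)),
    ← add_assoc, ← sum_add_distrib]
  congr 1
  refine sum_congr rfl fun r _ => ?_
  rw [xiStar, add_mul]
  congr 2
  refine sum_congr rfl fun j _ => ?_
  rw [xi_natCast_sub]
  split_ifs with h
  · rw [Nat.cast_sub h, sub_sub_eq_add_sub, add_sub_right_comm]
  · simp

theorem eq_parmaPredictor_add_of_recurrence {N : ℕ} (hN : 0 < N) (Y E : ℤ → ℝ)
    (hY : ∀ k < N, Y (t - k) = φ 0 (t - k) + ∑ m ∈ Icc 1 p, φ m (t - k) * Y (t - k - m)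
      + (E (t - k) + ∑ j ∈ Icc 1 q, θ j (t - k) * E (t - k - j))) :
    Y t = parmaPredictor p φ q θ t N Y E + ∑ r ∈ range N, xiStar p φ q θ t r * E (t - r) := by
  have hunroll := head_eq_of_recurrence (a := fun k => xi p φ t k) (x := fun k => Y (t - k))
    (w := fun k => φ 0 (t - k) + (E (t - k) + ∑ j ∈ Icc 1 q, θ j (t - k) * E (t - ↑(k + j))))
    (b := fun m k => φ m (t - k)) hN (xi_zero p φ t)
    (fun s hs => by obtain ⟨k, rfl⟩ := Nat.exists_eq_add_one_of_ne_zero hs.ne'; exact xi_succ p φ t k)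
    (fun k hk => by rw [hY k hk]; push_cast [sub_add_eq_sub_sub]; ring)
  simp only [Nat.cast_zero, sub_zero, mul_add (xi p φ t _) (φ 0 _), sum_add_distrib] at hunroll
  rw [hunroll, sum_xi_mul_movingAverage, parmaPredictor]
  ring

end Parma

open MeasureTheory Filter

section MartingaleDifference

variable {Ω : Type*} {m0 : MeasurableSpace Ω} {μ : Measure Ω} [IsFiniteMeasure μ]
  {𝓕 : Filtration ℤ m0} {ε : ℤ → Ω → ℝ}

theorem condExp_eq_zero_of_lt (hε : ∀ τ, μ[ε τ | 𝓕 (τ - 1)] =ᵐ[μ] 0) {n τ : ℤ} (h : n < τ) :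
    μ[ε τ | 𝓕 n] =ᵐ[μ] 0 :=
  calc μ[ε τ | 𝓕 n] =ᵐ[μ] μ[μ[ε τ | 𝓕 (τ - 1)] | 𝓕 n] :=
        (condExp_condExp_of_le (𝓕.mono (by omega)) (𝓕.le _)).symm
    _ =ᵐ[μ] μ[0 | 𝓕 n] := condExp_congr_ae (hε τ)
    _ = 0 := condExp_zero

theorem condExp_sum_eq_zero_of_lt (hεint : ∀ τ, Integrable (ε τ) μ)
    (hε : ∀ τ, μ[ε τ | 𝓕 (τ - 1)] =ᵐ[μ] 0) {ι : Type*} (s : Finset ι) (c : ι → ℝ) (g : ι → ℤ)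
    {n : ℤ} (hg : ∀ i ∈ s, n < g i) :
    μ[fun ω => ∑ i ∈ s, c i * ε (g i) ω | 𝓕 n] =ᵐ[μ] 0 := by
  have hsum : (fun ω => ∑ i ∈ s, c i * ε (g i) ω) = ∑ i ∈ s, c i • ε (g i) := by
    ext ω; simp [Finset.sum_apply]
  have hterm : ∀ i ∈ s, μ[c i • ε (g i) | 𝓕 n] =ᵐ[μ] 0 := fun i hi =>
    (condExp_smul _ _ _).trans <| (condExp_eq_zero_of_lt hε (hg i hi)).mono fun ω hω => by
      simp [hω]
  rw [hsum]
  filter_upwards [condExp_finsetSum (s := s) (fun i _ => (hεint (g i)).smul (c i)) (𝓕 n),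
    (eventually_all_finset s).2 hterm] with ω hsum hzero
  rw [hsum, Finset.sum_apply]
  exact sum_eq_zero hzero

theorem integral_mul_eq_zero_of_lt (hεmeas : ∀ τ, StronglyMeasurable[𝓕 τ] (ε τ))
    (hεL2 : ∀ τ, MemLp (ε τ) 2 μ) (hε : ∀ τ, μ[ε τ | 𝓕 (τ - 1)] =ᵐ[μ] 0) {τ σ : ℤ}
    (h : τ < σ) : ∫ ω, ε τ ω * ε σ ω ∂μ = 0 := by
  have hpull : μ[ε τ * ε σ | 𝓕 (σ - 1)] =ᵐ[μ] ε τ * μ[ε σ | 𝓕 (σ - 1)] :=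
    condExp_mul_of_stronglyMeasurable_left ((hεmeas τ).mono (𝓕.mono (by omega)))
      ((hεL2 τ).integrable_mul (hεL2 σ)) ((hεL2 σ).integrable one_le_two)
  calc ∫ ω, ε τ ω * ε σ ω ∂μ = ∫ ω, μ[ε τ * ε σ | 𝓕 (σ - 1)] ω ∂μ :=
        (integral_condExp (𝓕.le _)).symm
    _ = ∫ _, (0 : ℝ) ∂μ :=
        integral_congr_ae <| hpull.trans <| (hε σ).mono fun ω hω => by simp [hω]
    _ = 0 := integral_zero _ _

theorem integral_sq_sum_mul (hεmeas : ∀ τ, StronglyMeasurable[𝓕 τ] (ε τ))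
    (hεL2 : ∀ τ, MemLp (ε τ) 2 μ) (hε : ∀ τ, μ[ε τ | 𝓕 (τ - 1)] =ᵐ[μ] 0) {ι : Type*}
    (s : Finset ι) (c : ι → ℝ) {g : ι → ℤ} (hg : Function.Injective g) :
    ∫ ω, (∑ i ∈ s, c i * ε (g i) ω) ^ 2 ∂μ = ∑ i ∈ s, c i ^ 2 * ∫ ω, ε (g i) ω ^ 2 ∂μ := by
  have hint : ∀ i j, Integrable (fun ω => ε (g i) ω * ε (g j) ω) μ := fun i j =>
    (hεL2 (g i)).integrable_mul (hεL2 (g j))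
  have horth : ∀ i j, i ≠ j → ∫ ω, ε (g i) ω * ε (g j) ω ∂μ = 0 := by
    intro i j hij
    rcases (hg.ne hij).lt_or_gt with h | h
    · exact integral_mul_eq_zero_of_lt hεmeas hεL2 hε h
    · simp_rw [mul_comm (ε (g i) _)]
      exact integral_mul_eq_zero_of_lt hεmeas hεL2 hε h
  calc ∫ ω, (∑ i ∈ s, c i * ε (g i) ω) ^ 2 ∂μ
      = ∫ ω, ∑ i ∈ s, ∑ j ∈ s, c i * c j * (ε (g i) ω * ε (g j) ω) ∂μ := by
        simp_rw [sq, sum_mul_sum, mul_mul_mul_comm]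
    _ = ∑ i ∈ s, ∑ j ∈ s, c i * c j * ∫ ω, ε (g i) ω * ε (g j) ω ∂μ := by
        rw [integral_finsetSum _ fun i _ => integrable_finsetSum _ fun j _ => (hint i j).const_mul _]
        refine sum_congr rfl fun i _ => ?_
        rw [integral_finsetSum _ fun j _ => (hint i j).const_mul _]
        simp_rw [integral_const_mul]
    _ = ∑ i ∈ s, c i ^ 2 * ∫ ω, ε (g i) ω ^ 2 ∂μ := by
        refine sum_congr rfl fun i hi => ?_
        rw [sum_eq_single i (fun j _ hji => by rw [horth i j hji.symm, mul_zero]) (absurd hi)]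
        simp_rw [sq]

theorem sub_condExp_ae_eq {m : MeasurableSpace Ω} (hm : m ≤ m0) {X G S : Ω → ℝ}
    (hX : X =ᵐ[μ] G + S) (hGmeas : StronglyMeasurable[m] G) (hGint : Integrable G μ)
    (hSint : Integrable S μ) (hS : μ[S | m] =ᵐ[μ] 0) :
    X - μ[X | m] =ᵐ[μ] S := by
  have hcond : μ[X | m] =ᵐ[μ] G :=
    calc μ[X | m] =ᵐ[μ] μ[G + S | m] := condExp_congr_ae hX
      _ =ᵐ[μ] μ[G | m] + μ[S | m] := condExp_add hGint hSint m
      _ =ᵐ[μ] G + 0 :=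
        (EventuallyEq.of_eq (condExp_of_stronglyMeasurable hm hGmeas hGint)).add hS
      _ = G := add_zero G
  filter_upwards [hX, hcond] with ω hXω hcω
  simp [hXω, hcω]

end MartingaleDifference

section Forecast

variable (p : ℕ) (φ : ℕ → ℤ → ℝ) (q : ℕ) (θ : ℕ → ℤ → ℝ)
  {Ω : Type*} {m0 : MeasurableSpace Ω} {μ : Measure Ω} {𝓕 : Filtration ℤ m0}

theorem stronglyMeasurable_parmaPredictor {y ε : ℤ → Ω → ℝ}
    (hy : ∀ τ, StronglyMeasurable[𝓕 τ] (y τ)) (hε : ∀ τ, StronglyMeasurable[𝓕 τ] (ε τ))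
    (t : ℤ) (N : ℕ) :
    StronglyMeasurable[𝓕 (t - N)] fun ω => parmaPredictor p φ q θ t N (y · ω) (ε · ω) := by
  refine (stronglyMeasurable_const.add ?_).add ?_ <;>
    refine stronglyMeasurable_fun_sum _ fun k _ => stronglyMeasurable_fun_sum _ fun m _ => ?_ <;>
    split_ifs with h
  any_goals exact stronglyMeasurable_const
  · exact ((hy _).mono (𝓕.mono (by omega))).const_mul _
  · exact ((hε _).mono (𝓕.mono (by omega))).const_mul _

theorem integrable_parmaPredictor [IsFiniteMeasure μ] {y ε : ℤ → Ω → ℝ}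
    (hy : ∀ τ, Integrable (y τ) μ) (hε : ∀ τ, Integrable (ε τ) μ) (t : ℤ) (N : ℕ) :
    Integrable (fun ω => parmaPredictor p φ q θ t N (y · ω) (ε · ω)) μ := by
  refine ((integrable_const _).add ?_).add ?_ <;>
    refine integrable_finsetSum _ fun k _ => integrable_finsetSum _ fun m _ => ?_ <;>
    split_ifs
  any_goals exact integrable_zero _ _ _
  · exact (hy _).const_mul _
  · exact (hε _).const_mul _

theorem parma_ae_eq_predictor_add {ε y u : ℤ → Ω → ℝ}
    (hu : ∀ τ : ℤ, ∀ ω, u τ ω = ε τ ω + ∑ j ∈ Icc 1 q, θ j τ * ε (τ - j) ω)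
    (hy : ∀ τ : ℤ, y τ =ᵐ[μ] fun ω =>
      φ 0 τ + (∑ m ∈ Icc 1 p, φ m τ * y (τ - m) ω) + u τ ω)
    (t : ℤ) {N : ℕ} (hN : 0 < N) :
    y t =ᵐ[μ] (fun ω => parmaPredictor p φ q θ t N (y · ω) (ε · ω))
      + fun ω => ∑ r ∈ range N, xiStar p φ q θ t r * ε (t - r) ω := by
  filter_upwards [(eventually_all_finset (range N)).2 fun k _ => hy (t - k)] with ω hω
  exact eq_parmaPredictor_add_of_recurrence p φ q θ t hN (y · ω) (ε · ω) fun k hk => by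
    rw [hω k (mem_range.2 hk), hu]

end Forecast

theorem parma_forecast_error_and_mse_general
    (p : ℕ) (φ : ℕ → ℤ → ℝ)
    (q : ℕ) (θ : ℕ → ℤ → ℝ)
    {Ω : Type*} {m0 : MeasurableSpace Ω} {μ : Measure Ω} [IsProbabilityMeasure μ]
    (𝓕 : Filtration ℤ m0)
    (ε : ℤ → Ω → ℝ)
    (hεmeas : ∀ τ : ℤ, StronglyMeasurable[𝓕 τ] (ε τ))
    (hεL2 : ∀ τ : ℤ, MemLp (ε τ) 2 μ)
    (hεmart : ∀ τ : ℤ, μ[ε τ | 𝓕 (τ - 1)] =ᵐ[μ] 0)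
    (y : ℤ → Ω → ℝ)
    (hymeas : ∀ τ : ℤ, StronglyMeasurable[𝓕 τ] (y τ))
    (hyint : ∀ τ : ℤ, Integrable (y τ) μ)
    (u : ℤ → Ω → ℝ)
    (hu : ∀ τ : ℤ, ∀ ω, u τ ω = ε τ ω + ∑ j ∈ Finset.Icc 1 q, θ j τ * ε (τ - j) ω)
    (hy : ∀ τ : ℤ, y τ =ᵐ[μ] fun ω =>
      φ 0 τ + (∑ m ∈ Finset.Icc 1 p, φ m τ * y (τ - m) ω) + u τ ω)
    (t : ℤ) (N : ℕ) (hN : 1 ≤ N) :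
    ((fun ω => y t ω - (μ[y t | 𝓕 (t - N)]) ω) =ᵐ[μ]
      fun ω => ∑ r ∈ Finset.range N,
        (xi p φ t r
          + ∑ j ∈ Finset.Icc 1 q, θ j (t - r + j) * xi p φ t ((r : ℤ) - j))
          * ε (t - r) ω) ∧
    ∫ ω, (y t ω - (μ[y t | 𝓕 (t - N)]) ω) ^ 2 ∂μ
      = ∑ r ∈ Finset.range N,
          (xi p φ t r
            + ∑ j ∈ Finset.Icc 1 q, θ j (t - r + j) * xi p φ t ((r : ℤ) - j)) ^ 2
            * ∫ ω, (ε (t - r) ω) ^ 2 ∂μ := by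
  have hεint : ∀ τ, Integrable (ε τ) μ := fun τ => (hεL2 τ).integrable one_le_two
  have herr : (fun ω => y t ω - (μ[y t | 𝓕 (t - N)]) ω) =ᵐ[μ]
      fun ω => ∑ r ∈ range N, xiStar p φ q θ t r * ε (t - r) ω :=
    sub_condExp_ae_eq (𝓕.le _) (parma_ae_eq_predictor_add p φ q θ hu hy t hN)
      (stronglyMeasurable_parmaPredictor p φ q θ hymeas hεmeas t N)
      (integrable_parmaPredictor p φ q θ hyint hεint t N)
      (integrable_finsetSum _ fun r _ => (hεint _).const_mul _)
      (condExp_sum_eq_zero_of_lt hεint hεmart _ _ _ fun r hr => by rw [mem_range] at hr; omega)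
  refine ⟨herr, (integral_congr_ae (herr.fun_comp (· ^ 2))).trans ?_⟩
  exact integral_sq_sum_mul hεmeas hεL2 hεmart _ _ fun a b h => by simpa using h

/-- The forecast error and mean square error of the `N`-step-ahead predictor of a
PARMA(`p,q`) process, in terms of `ξ*_{t,r} = ξ_{t,r} + Σ_{j=1}^q θ_j(t−r+j) ξ_{t,r−j}`. -/
theorem parma_forecast_error_and_mse
    (p : ℕ) (hp : 1 ≤ p) (φ : ℕ → ℤ → ℝ)
    (q : ℕ) (hq : 1 ≤ q) (θ : ℕ → ℤ → ℝ)
    {Ω : Type*} {m0 : MeasurableSpace Ω} {μ : Measure Ω} [IsProbabilityMeasure μ]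
    (𝓕 : Filtration ℤ m0)
    (ε : ℤ → Ω → ℝ)
    (hεmeas : ∀ τ : ℤ, StronglyMeasurable[𝓕 τ] (ε τ))
    (hεL2 : ∀ τ : ℤ, MemLp (ε τ) 2 μ)
    (hεmart : ∀ τ : ℤ, μ[ε τ | 𝓕 (τ - 1)] =ᵐ[μ] 0)
    (y : ℤ → Ω → ℝ)
    (hymeas : ∀ τ : ℤ, StronglyMeasurable[𝓕 τ] (y τ))
    (hyint : ∀ τ : ℤ, Integrable (y τ) μ)
    (u : ℤ → Ω → ℝ)
    (hu : ∀ τ : ℤ, ∀ ω, u τ ω = ε τ ω + ∑ j ∈ Finset.Icc 1 q, θ j τ * ε (τ - j) ω)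
    (hy : ∀ τ : ℤ, y τ =ᵐ[μ] fun ω =>
      φ 0 τ + (∑ m ∈ Finset.Icc 1 p, φ m τ * y (τ - m) ω) + u τ ω)
    (t : ℤ) (N : ℕ) (hN : 1 ≤ N) :
    ((fun ω => y t ω - (μ[y t | 𝓕 (t - N)]) ω) =ᵐ[μ]
      fun ω => ∑ r ∈ Finset.range N,
        (xi p φ t r
          + ∑ j ∈ Finset.Icc 1 q, θ j (t - r + j) * xi p φ t ((r : ℤ) - j))
          * ε (t - r) ω) ∧
    ∫ ω, (y t ω - (μ[y t | 𝓕 (t - N)]) ω) ^ 2 ∂μ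
      = ∑ r ∈ Finset.range N,
          (xi p φ t r
            + ∑ j ∈ Finset.Icc 1 q, θ j (t - r + j) * xi p φ t ((r : ℤ) - j)) ^ 2
            * ∫ ω, (ε (t - r) ω) ^ 2 ∂μ :=
  parma_forecast_error_and_mse_general p φ q θ 𝓕 ε hεmeas hεL2 hεmart y hymeas hyint u hu hy t N hN
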